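/- arXiv:1102.2233 — 2 statements merged into one kernel-verified Lean document; each statement's English description precedes it below -/
import Mathlib

section
/- Let ω⁰, ω̂ ∈ ℝ^p and t = max_i |ω̂_i − ω⁰_i|. Suppose Σ_{i=1}^p |ω⁰_i|^q ≤ s for some 0 ≤ q < 1 and s ≥ 0. Then Σ_{i=1}^p |ω̂_i I{|ω̂_i| ≥ 2t} − ω⁰_i| ≤ (1 + 2^{1−q} + 3^{1−q}) t^{1−q} s. -/
open scoped BigOperators

/-!
Each coordinate error is at most `3^(1-q) t^(1-q) |ω⁰_i|^q`. If `ω̂_i` survives the threshold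
`2t`, then `|ω⁰_i| ≥ t`, so the error `|ω̂_i - ω⁰_i| ≤ t = min t |ω⁰_i|`; if it is killed, the
error is `|ω⁰_i| < 3t`, i.e. `|ω⁰_i| = min (3t) |ω⁰_i|`. In both cases `min y x ≤ y^(1-q) x^q` (a minimum is
at most any weighted geometric mean). Summing over `i` gives the bound with the constant
`3^(1-q)`, which is at most `1 + 2^(1-q) + 3^(1-q)`.
-/

open Real

noncomputable def hardThreshold (l x : ℝ) : ℝ :=
  if l ≤ |x| then x else 0

theorem min_le_rpow_one_sub_mul_rpow {x y q : ℝ} (hx : 0 ≤ x) (hy : 0 ≤ y)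
    (hq0 : 0 ≤ q) (hq1 : q ≤ 1) : min y x ≤ y ^ (1 - q) * x ^ q := by
  rcases le_total y x with hyx | hxy
  · calc min y x = y ^ (1 - q) * y ^ q := by
          rw [min_eq_left hyx, ← rpow_add' hy (by norm_num), sub_add_cancel, rpow_one]
      _ ≤ y ^ (1 - q) * x ^ q := by gcongr
  · calc min y x = x ^ (1 - q) * x ^ q := by
          rw [min_eq_right hxy, ← rpow_add' hx (by norm_num), sub_add_cancel, rpow_one]
      _ ≤ y ^ (1 - q) * x ^ q := by gcongr

theorem abs_hardThreshold_sub_le {a b t q : ℝ} (hba : |b - a| ≤ t) (hq0 : 0 ≤ q) (hq1 : q ≤ 1) :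
    |hardThreshold (2 * t) b - a| ≤ 3 ^ (1 - q) * t ^ (1 - q) * |a| ^ q := by
  have ht : 0 ≤ t := (abs_nonneg _).trans hba
  have hb_le : |b| ≤ |a| + t := by
    have := abs_sub_abs_le_abs_sub b a; linarith
  have ha_le : |a| ≤ |b| + t := by
    have := abs_sub_abs_le_abs_sub a b; rw [abs_sub_comm] at this; linarith
  unfold hardThreshold
  split_ifs with hkeep
  · have hmin : min t |a| = t := min_eq_left (by linarith)
    calc |b - a| ≤ min t |a| := by rw [hmin]; exact hba
      _ ≤ t ^ (1 - q) * |a| ^ q := min_le_rpow_one_sub_mul_rpow (abs_nonneg a) ht hq0 hq1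
      _ ≤ 3 ^ (1 - q) * t ^ (1 - q) * |a| ^ q := by
          rw [mul_assoc]
          exact le_mul_of_one_le_left (by positivity) (one_le_rpow (by norm_num) (by linarith))
  · have hmin : min (3 * t) |a| = |a| := min_eq_right (by linarith)
    calc |0 - a| = min (3 * t) |a| := by rw [zero_sub, abs_neg, hmin]
      _ ≤ (3 * t) ^ (1 - q) * |a| ^ q :=
          min_le_rpow_one_sub_mul_rpow (abs_nonneg a) (by linarith) hq0 hq1
      _ = 3 ^ (1 - q) * t ^ (1 - q) * |a| ^ q := by rw [mul_rpow (by norm_num) ht]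

theorem sum_abs_hardThreshold_sub_le {ι : Type*} [Fintype ι] (a b : ι → ℝ) {t q : ℝ}
    (hba : ∀ i, |b i - a i| ≤ t) (hq0 : 0 ≤ q) (hq1 : q ≤ 1) :
    ∑ i, |hardThreshold (2 * t) (b i) - a i| ≤
      3 ^ (1 - q) * t ^ (1 - q) * ∑ i, |a i| ^ q := by
  rw [Finset.mul_sum]
  exact Finset.sum_le_sum fun i _ => abs_hardThreshold_sub_le (hba i) hq0 hq1

theorem truncation_estimate_general {p : ℕ} (ω₀ ωhat : Fin p → ℝ)
    (q s t : ℝ) (hq0 : 0 ≤ q) (hq1 : q < 1)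
    (ht : t = ⨆ i, |ωhat i - ω₀ i|)
    (hsum : ∑ i, |ω₀ i| ^ q ≤ s) :
    ∑ i, |(if 2 * t ≤ |ωhat i| then ωhat i else 0) - ω₀ i| ≤
      (1 + 2 ^ (1 - q) + 3 ^ (1 - q)) * t ^ (1 - q) * s := by
  have hdev : ∀ i, |ωhat i - ω₀ i| ≤ t := fun i =>
    ht ▸ le_ciSup (f := fun j => |ωhat j - ω₀ j|) (Set.finite_range _).bddAbove i
  have ht0 : 0 ≤ t := ht ▸ iSup_nonneg fun i => abs_nonneg _
  have hC : (3 : ℝ) ^ (1 - q) ≤ 1 + 2 ^ (1 - q) + 3 ^ (1 - q) := by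
    have : (0 : ℝ) ≤ 2 ^ (1 - q) := by positivity
    linarith
  calc ∑ i, |hardThreshold (2 * t) (ωhat i) - ω₀ i|
      ≤ 3 ^ (1 - q) * t ^ (1 - q) * ∑ i, |ω₀ i| ^ q :=
        sum_abs_hardThreshold_sub_le ω₀ ωhat hdev hq0 hq1.le
    _ ≤ (1 + 2 ^ (1 - q) + 3 ^ (1 - q)) * t ^ (1 - q) * s := by gcongr

/-- Truncation estimate (display (7.9)): with `t = max_i |ω̂_i − ω⁰_i|` and
`Σ_i |ω⁰_i|^q ≤ s` for `0 ≤ q < 1`,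
`Σ_i |ω̂_i I{|ω̂_i| ≥ 2t} − ω⁰_i| ≤ (1 + 2^{1−q} + 3^{1−q}) t^{1−q} s`. -/
theorem truncation_estimate {p : ℕ} (hp : 0 < p) (ω₀ ωhat : Fin p → ℝ)
    (q s t : ℝ) (hq0 : 0 ≤ q) (hq1 : q < 1) (hs : 0 ≤ s)
    (ht : t = ⨆ i, |ωhat i - ω₀ i|)
    (hsum : ∑ i, |ω₀ i| ^ q ≤ s) :
    ∑ i, |(if 2 * t ≤ |ωhat i| then ωhat i else 0) - ω₀ i| ≤
      (1 + 2 ^ (1 - q) + 3 ^ (1 - q)) * t ^ (1 - q) * s :=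
  truncation_estimate_general ω₀ ωhat q s t hq0 hq1 ht hsum
end

section
/- (Deterministic core of Theorem 6, spectral norm bound.) Let Ω₀ be a symmetric positive definite p×p matrix with Σ₀ = Ω₀^{-1} and max_i Σ_j |(Ω₀)_{ij}|^q ≤ s₀ for some 0 ≤ q < 1. Let Ω̂ be a symmetric matrix obtained by the CLIME symmetrization of a matrix Ω̂₁ satisfying |Σ_n Ω̂₁ − I|_∞ ≤ λ and column-wise ℓ₁-minimality: each column of Ω̂₁ minimizes the ℓ₁ norm subject to the corresponding column constraint. If λ ≥ ‖Ω₀‖_{L₁} · |Σ_n − Σ₀|_∞, then ‖Ω̂ − Ω₀‖₂ ≤ 2(1 + 2^{1−q} + 3^{1−q})(4‖Ω₀‖_{L₁})^{1−q} s₀ λ^{1−q}. -/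
open scoped BigOperators

/-- Elementwise sup norm of a real matrix. -/
noncomputable def elemSupNorm {p q : ℕ} (A : Matrix (Fin p) (Fin q) ℝ) : ℝ :=
  ⨆ i, ⨆ j, |A i j|

/-- Matrix ℓ₁ norm: maximum absolute column sum. -/
noncomputable def matL1Norm {p q : ℕ} (A : Matrix (Fin p) (Fin q) ℝ) : ℝ :=
  ⨆ j, ∑ i, |A i j|

/-!
Write `M = ‖Ω₀‖_{L₁}`. Since `Sₙ Ω₀ - I = (Sₙ - Σ₀) Ω₀`, the columns of `Ω₀` are feasible, so by
ℓ₁-minimality every column of `Ω̂₁` has ℓ₁ norm at most that of `Ω₀`, hence at most `M`. From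
`Ω̂₁ - Ω₀ = Ω₀ ((Sₙ Ω̂₁ - I) - (Sₙ - Σ₀) Ω̂₁)` we get `|Ω̂₁ - Ω₀|_∞ ≤ 2Mλ`, and the symmetrization
keeps this bound while not increasing column ℓ₁ norms. For a column `u` of `Ω̂` and `v` of `Ω₀`
with `|u|₁ ≤ |v|₁`, each term satisfies `|uᵢ - vᵢ| + |vᵢ| - |uᵢ| ≤ 2 min(|uᵢ - vᵢ|, |vᵢ|)
≤ 2 |vᵢ|^q (2Mλ)^{1-q}`, so the column ℓ₁ error is at most `2 s₀ (2Mλ)^{1-q}`. Finally, the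
spectral norm of a symmetric matrix is bounded by its maximal absolute column sum (Schur test).
-/

open Finset

lemma abs_apply_le_elemSupNorm {p q : ℕ} (A : Matrix (Fin p) (Fin q) ℝ) (i : Fin p) (j : Fin q) :
    |A i j| ≤ elemSupNorm A :=
  (le_ciSup (Finite.bddAbove_range (fun j => |A i j|)) j).trans
    (le_ciSup (Finite.bddAbove_range (fun i => ⨆ j, |A i j|)) i)

lemma elemSupNorm_nonneg {p q : ℕ} (A : Matrix (Fin p) (Fin q) ℝ) : 0 ≤ elemSupNorm A :=
  Real.iSup_nonneg fun _ => Real.iSup_nonneg fun _ => abs_nonneg _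

lemma sum_abs_apply_le_matL1Norm {p q : ℕ} (A : Matrix (Fin p) (Fin q) ℝ) (j : Fin q) :
    ∑ i, |A i j| ≤ matL1Norm A :=
  le_ciSup (Finite.bddAbove_range (fun j => ∑ i, |A i j|)) j

lemma matL1Norm_nonneg {p q : ℕ} (A : Matrix (Fin p) (Fin q) ℝ) : 0 ≤ matL1Norm A :=
  Real.iSup_nonneg fun _ => sum_nonneg fun _ _ => abs_nonneg _

lemma min_le_rpow_mul_rpow {a b q : ℝ} (ha : 0 ≤ a) (hb : 0 ≤ b) (hq0 : 0 ≤ q) (hq1 : q ≤ 1) :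
    min a b ≤ a ^ q * b ^ (1 - q) := by
  have hmin : 0 ≤ min a b := le_min ha hb
  calc min a b = min a b ^ q * min a b ^ (1 - q) := by
        rw [← Real.rpow_add' hmin (by simp), add_sub_cancel, Real.rpow_one]
    _ ≤ a ^ q * b ^ (1 - q) := by
        have hq : 0 ≤ 1 - q := sub_nonneg.2 hq1
        gcongr
        exacts [min_le_left a b, min_le_right a b]

lemma abs_sub_add_abs_sub_abs_le (a b : ℝ) : |a - b| + (|b| - |a|) ≤ 2 * min |a - b| |b| := by
  have h₁ : |b| - |a| ≤ |a - b| := by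
    rw [abs_sub_comm]
    exact abs_sub_abs_le_abs_sub b a
  have h₂ : |a - b| ≤ |a| + |b| := abs_sub a b
  rw [mul_min_of_nonneg _ _ zero_le_two]
  exact le_min (by linarith) (by linarith)

lemma sum_abs_sub_le_of_sum_abs_le {ι : Type*} [Fintype ι] {u v : ι → ℝ} {t q : ℝ}
    (hl1 : ∑ i, |u i| ≤ ∑ i, |v i|) (hsup : ∀ i, |u i - v i| ≤ t) (ht : 0 ≤ t)
    (hq0 : 0 ≤ q) (hq1 : q ≤ 1) :
    ∑ i, |u i - v i| ≤ 2 * t ^ (1 - q) * ∑ i, |v i| ^ q := by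
  calc ∑ i, |u i - v i| ≤ ∑ i, (|u i - v i| + (|v i| - |u i|)) := by
        rw [sum_add_distrib, sum_sub_distrib]
        linarith
    _ ≤ ∑ i, 2 * min |u i - v i| |v i| :=
        sum_le_sum fun i _ => abs_sub_add_abs_sub_abs_le (u i) (v i)
    _ ≤ ∑ i, 2 * (|v i| ^ q * t ^ (1 - q)) := by
        gcongr with i
        calc min |u i - v i| |v i| ≤ min |v i| t := by
              rw [min_comm]
              exact min_le_min_left _ (hsup i)
          _ ≤ |v i| ^ q * t ^ (1 - q) := min_le_rpow_mul_rpow (abs_nonneg _) ht hq0 hq1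
    _ = 2 * t ^ (1 - q) * ∑ i, |v i| ^ q := by
        rw [← mul_sum, ← sum_mul]
        ring

namespace Matrix

variable {l m n : Type*} [Fintype m]

lemma abs_mul_apply_le_sum_abs_mul (A : Matrix l m ℝ) (B : Matrix m n ℝ) {i : l} {j : n} {b : ℝ}
    (hB : ∀ k, |B k j| ≤ b) : |(A * B) i j| ≤ (∑ k, |A i k|) * b := by
  rw [mul_apply, sum_mul]
  refine (abs_sum_le_sum_abs _ _).trans (sum_le_sum fun k _ => ?_)
  rw [abs_mul]
  exact mul_le_mul_of_nonneg_left (hB k) (abs_nonneg _)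

lemma abs_mul_apply_le_mul_sum_abs (A : Matrix l m ℝ) (B : Matrix m n ℝ) {i : l} {j : n} {a : ℝ}
    (hA : ∀ k, |A i k| ≤ a) : |(A * B) i j| ≤ a * ∑ k, |B k j| := by
  rw [mul_apply, mul_sum]
  refine (abs_sum_le_sum_abs _ _).trans (sum_le_sum fun k _ => ?_)
  rw [abs_mul]
  exact mul_le_mul_of_nonneg_right (hA k) (abs_nonneg _)

/-- Schur test. -/
theorem norm_toEuclideanCLM_le_sqrt_of_sum_abs_le [DecidableEq m] (A : Matrix m m ℝ) {R C : ℝ}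
    (hR : 0 ≤ R) (hrow : ∀ i, ∑ j, |A i j| ≤ R) (hcol : ∀ j, ∑ i, |A i j| ≤ C) :
    ‖toEuclideanCLM (𝕜 := ℝ) A‖ ≤ √(R * C) := by
  refine ContinuousLinearMap.opNorm_le_bound _ (Real.sqrt_nonneg _) fun x => ?_
  have hrow_sq : ∀ i : m, (∑ j, A i j * x j) ^ 2 ≤ R * ∑ j, |A i j| * x j ^ 2 := fun i =>
    calc (∑ j, A i j * x j) ^ 2 ≤ (∑ j, |A i j|) * ∑ j, |A i j| * x j ^ 2 :=
          sum_sq_le_sum_mul_sum_of_sq_le_mul _ (fun _ _ => abs_nonneg _)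
            (fun _ _ => by positivity) fun j _ => by
              rw [mul_pow, ← sq_abs (A i j), sq, mul_assoc]
      _ ≤ R * ∑ j, |A i j| * x j ^ 2 :=
          mul_le_mul_of_nonneg_right (hrow i) (sum_nonneg fun _ _ => by positivity)
  have key : ‖toEuclideanCLM (𝕜 := ℝ) A x‖ ^ 2 ≤ R * C * ‖x‖ ^ 2 := by
    simp only [EuclideanSpace.real_norm_sq_eq, ofLp_toEuclideanCLM, mulVec, dotProduct]
    calc ∑ i, (∑ j, A i j * x j) ^ 2 ≤ ∑ i, R * ∑ j, |A i j| * x j ^ 2 :=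
          sum_le_sum fun i _ => hrow_sq i
      _ = R * ∑ j, (∑ i, |A i j|) * x j ^ 2 := by
          rw [← mul_sum, sum_comm]
          simp only [sum_mul]
      _ ≤ R * ∑ j, C * x j ^ 2 := by
          gcongr with j
          exact hcol j
      _ = R * C * ∑ j, x j ^ 2 := by
          rw [← mul_sum, mul_assoc]
  calc ‖toEuclideanCLM (𝕜 := ℝ) A x‖ = √(‖toEuclideanCLM (𝕜 := ℝ) A x‖ ^ 2) :=
        (Real.sqrt_sq (norm_nonneg _)).symm
    _ ≤ √(R * C * ‖x‖ ^ 2) := Real.sqrt_le_sqrt key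
    _ = √(R * C) * ‖x‖ := by
        rw [Real.sqrt_mul' _ (sq_nonneg _), Real.sqrt_sq (norm_nonneg _)]

theorem IsSymm.norm_toEuclideanCLM_le_of_sum_abs_le [DecidableEq m] {A : Matrix m m ℝ}
    (hA : A.IsSymm) {C : ℝ} (hC : 0 ≤ C) (hcol : ∀ j, ∑ i, |A i j| ≤ C) :
    ‖toEuclideanCLM (𝕜 := ℝ) A‖ ≤ C := by
  have hrow : ∀ i, ∑ j, |A i j| ≤ C := fun i => by
    simpa only [hA.apply] using hcol i
  simpa [Real.sqrt_mul_self hC] using A.norm_toEuclideanCLM_le_sqrt_of_sum_abs_le hC hrow hcol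

end Matrix

namespace CLIME

open Matrix

variable {n : Type*} {Ω S₀ Sn X Y : Matrix n n ℝ} {E M lam : ℝ}

lemma abs_sub_apply_le_of_pick (hΩ : Ω.IsSymm) (hpick : ∀ i j, Y i j = X i j ∨ Y i j = X j i)
    {c : ℝ} (hX : ∀ i j, |X i j - Ω i j| ≤ c) (i j : n) : |Y i j - Ω i j| ≤ c := by
  rcases hpick i j with h | h
  · rw [h]; exact hX i j
  · rw [h, ← hΩ.apply]; exact hX j i

variable [Fintype n]

lemma abs_mul_apply_le_of_sum_abs_le (hE : ∀ i j, |(Sn - S₀) i j| ≤ E)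
    (hcol : ∀ j, ∑ i, |X i j| ≤ M) (hlam : M * E ≤ lam) (i j : n) :
    |((Sn - S₀) * X) i j| ≤ lam :=
  calc |((Sn - S₀) * X) i j| ≤ E * ∑ k, |X k j| := abs_mul_apply_le_mul_sum_abs _ _ (hE i)
    _ ≤ E * M := mul_le_mul_of_nonneg_left (hcol j) ((abs_nonneg _).trans (hE i i))
    _ ≤ lam := by linarith

variable [DecidableEq n]

lemma abs_mul_sub_one_apply_le (hΩ : S₀ * Ω = 1) (hE : ∀ i j, |(Sn - S₀) i j| ≤ E)
    (hcol : ∀ j, ∑ i, |Ω i j| ≤ M) (hlam : M * E ≤ lam) (i j : n) :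
    |(Sn * Ω - 1) i j| ≤ lam := by
  rw [← hΩ, ← sub_mul]
  exact abs_mul_apply_le_of_sum_abs_le hE hcol hlam i j

lemma sum_abs_col_le_of_l1_minimal
    (hmin : ∀ i : n, ∀ β : n → ℝ,
      (∀ k, |Sn.mulVec β k - (if k = i then (1 : ℝ) else 0)| ≤ lam) →
        ∑ j, |X j i| ≤ ∑ j, |β j|)
    (hfeas : ∀ k i, |(Sn * Ω - 1) k i| ≤ lam) (i : n) :
    ∑ j, |X j i| ≤ ∑ j, |Ω j i| :=
  hmin i (fun j => Ω j i) fun k => by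
    simpa [mulVec, dotProduct, mul_apply, one_apply] using hfeas k i

lemma abs_sub_apply_le (hΩ : Ω * S₀ = 1) (hrow : ∀ i, ∑ k, |Ω i k| ≤ M)
    (hE : ∀ i j, |(Sn - S₀) i j| ≤ E) (hcolX : ∀ j, ∑ i, |X i j| ≤ M) (hlam : M * E ≤ lam)
    (hfeas : ∀ i j, |(Sn * X - 1) i j| ≤ lam) (i j : n) :
    |X i j - Ω i j| ≤ 2 * M * lam := by
  have hlam0 : 0 ≤ lam := (abs_nonneg _).trans (hfeas i j)
  have hresid : ∀ k l, |(S₀ * X - 1) k l| ≤ 2 * lam := fun k l => by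
    have hdecomp : S₀ * X - 1 = (Sn * X - 1) - (Sn - S₀) * X := by noncomm_ring
    rw [hdecomp, Matrix.sub_apply]
    linarith [hfeas k l, abs_mul_apply_le_of_sum_abs_le hE hcolX hlam k l,
      abs_sub ((Sn * X - 1) k l) (((Sn - S₀) * X) k l)]
  have hdiff : X - Ω = Ω * (S₀ * X - 1) := by rw [mul_sub, ← mul_assoc, hΩ, one_mul, mul_one]
  calc |X i j - Ω i j| = |(Ω * (S₀ * X - 1)) i j| := by rw [← hdiff, Matrix.sub_apply]
    _ ≤ (∑ k, |Ω i k|) * (2 * lam) := abs_mul_apply_le_sum_abs_mul _ _ fun k => hresid k j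
    _ ≤ M * (2 * lam) := by gcongr; exact hrow i
    _ = 2 * M * lam := by ring

end CLIME

open CLIME in
theorem clime_spectral_bound_general {p : ℕ}
    (Om₀ S₀ Sn Omhat1 Omhat : Matrix (Fin p) (Fin p) ℝ)
    (q s₀ lam : ℝ) (hq0 : 0 ≤ q) (hq1 : q < 1) (hs₀ : 0 ≤ s₀)
    (hΩsym : Om₀.IsSymm) (hΩpd : Om₀.PosDef)
    (hS : S₀ = Om₀⁻¹)
    (hsparse : ∀ i, ∑ j, |Om₀ i j| ^ q ≤ s₀)
    -- feasibility of Ω̂₁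
    (hfeas : ∀ i j, |(Sn * Omhat1 - 1) i j| ≤ lam)
    -- column-wise ℓ₁-minimality of Ω̂₁
    (hmin : ∀ i : Fin p, ∀ β : Fin p → ℝ,
      (∀ k, |Sn.mulVec β k - (if k = i then (1 : ℝ) else 0)| ≤ lam) →
        ∑ j, |Omhat1 j i| ≤ ∑ j, |β j|)
    -- CLIME symmetrization: Ω̂ is symmetric and each entry is the smaller-magnitude
    -- one among the (i,j) and (j,i) entries of Ω̂₁
    (hsym : Omhat.IsSymm)
    (hpick : ∀ i j, Omhat i j = Omhat1 i j ∨ Omhat i j = Omhat1 j i)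
    (hmag : ∀ i j, |Omhat i j| ≤ |Omhat1 i j|)
    -- tuning parameter condition
    (hlam : matL1Norm Om₀ * elemSupNorm (Sn - S₀) ≤ lam) :
    ‖(Matrix.toEuclideanCLM (𝕜 := ℝ)) (Omhat - Om₀)‖ ≤
      2 * (1 + 2 ^ (1 - q) + 3 ^ (1 - q)) * (4 * matL1Norm Om₀) ^ (1 - q) *
        s₀ * lam ^ (1 - q) := by
  set M := matL1Norm Om₀
  have hM : 0 ≤ M := matL1Norm_nonneg Om₀
  have hlam0 : 0 ≤ lam := (mul_nonneg hM (elemSupNorm_nonneg _)).trans hlam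
  have hdet : IsUnit Om₀.det := hΩpd.det_pos.ne'.isUnit
  have hE := abs_apply_le_elemSupNorm (Sn - S₀)
  have hcol₀ := sum_abs_apply_le_matL1Norm Om₀
  have hrow₀ : ∀ i, ∑ j, |Om₀ i j| ≤ M := fun i => by simpa only [hΩsym.apply] using hcol₀ i
  have hcol₁ : ∀ j, ∑ i, |Omhat1 i j| ≤ ∑ i, |Om₀ i j| := sum_abs_col_le_of_l1_minimal hmin
    (abs_mul_sub_one_apply_le (hS ▸ Om₀.nonsing_inv_mul hdet) hE hcol₀ hlam)
  have hentry : ∀ i j, |Omhat i j - Om₀ i j| ≤ 2 * M * lam := abs_sub_apply_le_of_pick hΩsym hpick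
    (abs_sub_apply_le (hS ▸ Om₀.mul_nonsing_inv hdet) hrow₀ hE
      (fun j => (hcol₁ j).trans (hcol₀ j)) hlam hfeas)
  have hcol : ∀ j, ∑ i, |(Omhat - Om₀) i j| ≤ 2 * (2 * M * lam) ^ (1 - q) * s₀ := fun j =>
    calc ∑ i, |(Omhat - Om₀) i j| ≤ 2 * (2 * M * lam) ^ (1 - q) * ∑ i, |Om₀ i j| ^ q :=
          sum_abs_sub_le_of_sum_abs_le ((sum_le_sum fun i _ => hmag i j).trans (hcol₁ j))
            (fun i => hentry i j) (by positivity) hq0 hq1.le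
      _ ≤ 2 * (2 * M * lam) ^ (1 - q) * s₀ := by
          gcongr
          simpa only [hΩsym.apply] using hsparse j
  refine ((hsym.sub hΩsym).norm_toEuclideanCLM_le_of_sum_abs_le (by positivity) hcol).trans ?_
  have hconst : (1 : ℝ) ≤ 1 + 2 ^ (1 - q) + 3 ^ (1 - q) := by
    have : (0 : ℝ) ≤ 2 ^ (1 - q) + 3 ^ (1 - q) := by positivity
    linarith
  calc 2 * (2 * M * lam) ^ (1 - q) * s₀ ≤ 2 * (4 * M * lam) ^ (1 - q) * s₀ := by
        gcongr
        nlinarith [mul_nonneg hM hlam0]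
    _ = 2 * 1 * (4 * M) ^ (1 - q) * s₀ * lam ^ (1 - q) := by
        rw [Real.mul_rpow (by positivity) hlam0]
        ring
    _ ≤ 2 * (1 + 2 ^ (1 - q) + 3 ^ (1 - q)) * (4 * M) ^ (1 - q) * s₀ * lam ^ (1 - q) := by
        gcongr

/-- Deterministic core of Theorem 6 (spectral norm bound) for the CLIME estimator. -/
theorem clime_spectral_bound {p : ℕ} (hp : 0 < p)
    (Om₀ S₀ Sn Omhat1 Omhat : Matrix (Fin p) (Fin p) ℝ)
    (q s₀ lam : ℝ) (hq0 : 0 ≤ q) (hq1 : q < 1) (hs₀ : 0 ≤ s₀)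
    (hΩsym : Om₀.IsSymm) (hΩpd : Om₀.PosDef)
    (hS : S₀ = Om₀⁻¹)
    (hsparse : ∀ i, ∑ j, |Om₀ i j| ^ q ≤ s₀)
    -- feasibility of Ω̂₁
    (hfeas : ∀ i j, |(Sn * Omhat1 - 1) i j| ≤ lam)
    -- column-wise ℓ₁-minimality of Ω̂₁
    (hmin : ∀ i : Fin p, ∀ β : Fin p → ℝ,
      (∀ k, |Sn.mulVec β k - (if k = i then (1 : ℝ) else 0)| ≤ lam) →
        ∑ j, |Omhat1 j i| ≤ ∑ j, |β j|)
    -- CLIME symmetrization: Ω̂ is symmetric and each entry is the smaller-magnitude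
    -- one among the (i,j) and (j,i) entries of Ω̂₁
    (hsym : Omhat.IsSymm)
    (hpick : ∀ i j, Omhat i j = Omhat1 i j ∨ Omhat i j = Omhat1 j i)
    (hmag : ∀ i j, |Omhat i j| ≤ |Omhat1 i j|)
    -- tuning parameter condition
    (hlam : matL1Norm Om₀ * elemSupNorm (Sn - S₀) ≤ lam) :
    ‖(Matrix.toEuclideanCLM (𝕜 := ℝ)) (Omhat - Om₀)‖ ≤
      2 * (1 + 2 ^ (1 - q) + 3 ^ (1 - q)) * (4 * matL1Norm Om₀) ^ (1 - q) *
        s₀ * lam ^ (1 - q) :=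
  clime_spectral_bound_general Om₀ S₀ Sn Omhat1 Omhat q s₀ lam hq0 hq1 hs₀ hΩsym hΩpd hS hsparse
    hfeas hmin hsym hpick hmag hlam
end
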